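/- arXiv:0804.0006 — 2 statements merged into one kernel-verified Lean document; each statement's English description precedes it below -/
import Mathlib

section
/- Let C ⊆ F^m be a 1-code with 0 ∈ C, let Ċ := C \ {0}, and let P(C) := (H \ ⋃_{ι∈Ċ} (R_ι + ẑι + e^(ι))) ∪ ⋃_{ι∈Ċ} (R_ι + ẑι). Then C = {ι ∈ F^m : ẑι ∈ P(C)}; that is, fixing the coordinates indexed by non-basis vectors of F^m to zero, the words of P(C) supported on the first m coordinates are exactly the codewords of C. -/
/-- `F^m`: binary words of length `m`, i.e. the vector space `(Fin m → ZMod 2)` over GF(2). -/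
abbrev Fm (m : ℕ) := Fin m → ZMod 2

/-- Index set for `F^n` with `n = 2^m - 1`: the nonzero vectors of `F^m`. -/
abbrev Idx (m : ℕ) := {v : Fm m // v ≠ 0}

/-- `F^n`: binary words of length `n = 2^m - 1`, with coordinates indexed by
nonzero vectors of `F^m`. -/
abbrev Fn (m : ℕ) := Idx m → ZMod 2

/-- The coordinate of `c : F^n` at index `α : F^m` (junk value `0` when `α = 0`,
which is never used since coordinates are only ever accessed at nonzero indices). -/
def coord {m : ℕ} (c : Fn m) (α : Fm m) : ZMod 2 :=
  if h : α = 0 then 0 else c ⟨α, h⟩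

/-- `e^(ι)`: the word of `F^n` with `1` in coordinate `ι` and `0` elsewhere. -/
def eWord {m : ℕ} (ι : Idx m) : Fn m := fun κ => if κ = ι then 1 else 0

/-- `ẑα = (α, 0^{n-m})`: the word of `F^n` whose coordinate at index `κ` equals `α i`
if `κ = π^(i)` is the `i`-th standard basis vector `Pi.single i 1`, and `0` otherwise. -/
def zhat {m : ℕ} (α : Fm m) : Fn m :=
  fun κ => ∑ i : Fin m, if (κ : Fm m) = Pi.single i 1 then α i else 0

/-- The Hamming code `H = {c ∈ F^n : ∑_{ι ≠ 0} c_ι • ι = 0}`. -/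
def hammingCode (m : ℕ) : Set (Fn m) :=
  {c | ∑ ι : Idx m, c ι • (ι : Fm m) = 0}

/-- The linear `ι`-component `R_ι = {c ∈ H : c_α = c_{α+ι} ∀ α ∉ {0, ι}}`. -/
def Rcomp {m : ℕ} (ι : Idx m) : Set (Fn m) :=
  {c | c ∈ hammingCode m ∧
    ∀ α : Fm m, α ≠ 0 → α ≠ (ι : Fm m) → coord c α = coord c (α + ι)}

/-- The coset `M + z = {c + z : c ∈ M}`. -/
def coset {m : ℕ} (M : Set (Fn m)) (z : Fn m) : Set (Fn m) := (fun c => c + z) '' M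

/-- The neighborhood `Ω(M)` of `M ⊆ F^n`: all words at Hamming distance at most 1 from `M`. -/
def nbhd {m : ℕ} (M : Set (Fn m)) : Set (Fn m) :=
  {x | ∃ c ∈ M, hammingDist x c ≤ 1}

/-- A `1`-code: any two distinct elements are at Hamming distance at least 3. -/
def IsOneCode {ι : Type*} [Fintype ι] (C : Set (ι → ZMod 2)) : Prop :=
  ∀ x ∈ C, ∀ y ∈ C, x ≠ y → 3 ≤ hammingDist x y

/-- A `1`-perfect code in `F^n`: a `1`-code whose radius-1 balls cover all of `F^n`. -/
def IsOnePerfect {m : ℕ} (P : Set (Fn m)) : Prop :=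
  IsOneCode P ∧ ∀ x : Fn m, ∃ c ∈ P, hammingDist x c ≤ 1

/-- In characteristic 2, the sum of two distinct vectors is nonzero. -/
lemma add_ne_zero_of_ne' {m : ℕ} {ι κ : Fm m} (h : ι ≠ κ) : ι + κ ≠ 0 := by
  intro h0
  apply h
  funext i
  have h1 := congrFun h0 i
  have key : ∀ a b : ZMod 2, a + b = 0 → a = b := by decide
  exact key _ _ h1

/-- The code `P(C) = (H \ ⋃_{ι∈Ċ}(R_ι + ẑι + e^(ι))) ∪ ⋃_{ι∈Ċ}(R_ι + ẑι)`,
where `Ċ = C \ {0}` (the union is over the nonzero codewords of `C`). -/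
def PofC {m : ℕ} (C : Set (Fm m)) : Set (Fn m) :=
  (hammingCode m \
      ⋃ (ι : Idx m) (_ : (ι : Fm m) ∈ C), coset (Rcomp ι) (zhat (ι : Fm m) + eWord ι))
    ∪ ⋃ (ι : Idx m) (_ : (ι : Fm m) ∈ C), coset (Rcomp ι) (zhat (ι : Fm m))

lemma single_ne_zero' {m : ℕ} (i : Fin m) : (Pi.single i 1 : Fm m) ≠ 0 := by
  intro h
  have := congrFun h i
  simp [Pi.single_eq_same] at this

lemma single_inj' {m : ℕ} {i j : Fin m} (h : (Pi.single i 1 : Fm m) = Pi.single j 1) : i = j := by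
  by_contra hij
  have := congrFun h i
  rw [Pi.single_eq_same, Pi.single_eq_of_ne hij] at this
  exact one_ne_zero this

lemma zhat_single {m : ℕ} (α : Fm m) (i : Fin m) (h : (Pi.single i 1 : Fm m) ≠ 0) :
    zhat α ⟨Pi.single i 1, h⟩ = α i := by
  unfold zhat
  rw [Finset.sum_eq_single i]
  · simp
  · intro j _ hj
    rw [if_neg]
    intro he
    exact hj (single_inj' he).symm
  · simp

lemma zhat_not_single {m : ℕ} (α : Fm m) (κ : Idx m)
    (h : ∀ i, (κ : Fm m) ≠ Pi.single i 1) : zhat α κ = 0 := by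
  unfold zhat
  exact Finset.sum_eq_zero fun i _ => if_neg (h i)

lemma syndrome_zhat {m : ℕ} (α : Fm m) : ∑ κ : Idx m, zhat α κ • (κ : Fm m) = α := by
  unfold zhat
  simp_rw [Finset.sum_smul, ite_smul, zero_smul]
  rw [Finset.sum_comm]
  have : ∀ i : Fin m, ∑ κ : Idx m, (if (κ : Fm m) = Pi.single i 1 then α i • (κ : Fm m) else 0)
      = Pi.single i (α i) := by
    intro i
    rw [Finset.sum_eq_single (⟨Pi.single i 1, single_ne_zero' i⟩ : Idx m)]
    · rw [if_pos rfl]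
      ext k
      rcases eq_or_ne k i with hk | hk
      · subst hk; simp
      · simp [Pi.single_eq_of_ne hk]
    · intro κ _ hκ
      rw [if_neg]
      intro he
      exact hκ (Subtype.ext he)
    · simp
  simp_rw [this]
  exact funext fun k => by simp [Finset.sum_apply, Pi.single_apply]

-- new lemmas

lemma double_zero {m : ℕ} (x : Fn m) : x + x = 0 := by
  funext κ
  show x κ + x κ = 0
  have : ∀ a : ZMod 2, a + a = 0 := by decide
  exact this _

lemma double_zero_m {m : ℕ} (x : Fm m) : x + x = 0 := by
  funext k
  show x k + x k = 0
  have : ∀ a : ZMod 2, a + a = 0 := by decide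
  exact this _

lemma syndrome_add {m : ℕ} (x y : Fn m) :
    ∑ κ : Idx m, (x + y) κ • (κ : Fm m)
      = (∑ κ : Idx m, x κ • (κ : Fm m)) + ∑ κ : Idx m, y κ • (κ : Fm m) := by
  rw [← Finset.sum_add_distrib]
  exact Finset.sum_congr rfl fun κ _ => by
    show (x κ + y κ) • _ = _
    rw [add_smul]

/-- weight bound: a word supported on `{i, j}` has Hamming norm ≤ 2. -/
lemma wt_le_two {m : ℕ} (x : Fm m) (i j : Fin m)
    (h : ∀ k, k ≠ i → k ≠ j → x k = 0) : hammingDist (0 : Fm m) x ≤ 2 := by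
  rw [hammingDist_zero_left, hammingNorm]
  calc ({k | x k ≠ 0} : Finset (Fin m)).card ≤ ({i, j} : Finset (Fin m)).card := by
        apply Finset.card_le_card
        intro k hk
        simp only [Finset.mem_filter, Finset.mem_univ, true_and, ne_eq] at hk
        simp only [Finset.mem_insert, Finset.mem_singleton]
        by_contra hc
        push_neg at hc
        exact hk (h k hc.1 hc.2)
    _ ≤ 2 := Finset.card_insert_le _ _ |>.trans (by simp)

theorem stmt7 (m : ℕ) (hm : 1 ≤ m) (C : Set (Fm m)) (hC : IsOneCode C) (h0 : (0 : Fm m) ∈ C) :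
    C = {ι : Fm m | zhat ι ∈ PofC C} := by
  ext ι
  simp only [Set.mem_setOf_eq]
  constructor
  · intro hι
    by_cases hz : ι = 0
    · subst hz
      left
      have hzh0 : zhat (0 : Fm m) = 0 := by
        funext κ
        show zhat 0 κ = 0
        unfold zhat
        simp
      constructor
      · show _ ∈ hammingCode m
        rw [hzh0]
        show ∑ κ : Idx m, (0 : ZMod 2) • (κ : Fm m) = 0
        simp
      · intro hmem
        rw [Set.mem_iUnion] at hmem
        obtain ⟨γ, hmem⟩ := hmem
        rw [Set.mem_iUnion] at hmem
        obtain ⟨hγC, c, hc, hceq⟩ := hmem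
        -- c + (zhat γ + eWord γ) = zhat 0 = 0, so c = zhat γ + eWord γ
        rw [hzh0] at hceq
        have hcval : c = zhat (γ : Fm m) + eWord γ := by
          have h1 : c + (zhat (γ : Fm m) + eWord γ) = 0 := hceq
          calc c = c + ((zhat (γ : Fm m) + eWord γ) + (zhat (γ : Fm m) + eWord γ)) := by
                rw [double_zero, add_zero]
            _ = (c + (zhat (γ : Fm m) + eWord γ)) + (zhat (γ : Fm m) + eWord γ) :=
                (add_assoc _ _ _).symm
            _ = zhat (γ : Fm m) + eWord γ := by rw [h1, zero_add]
        subst hcval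
        -- γ ∈ C, γ ≠ 0, so weight γ ≥ 3
        have hγne : (γ : Fm m) ≠ 0 := γ.2
        have hd3 : 3 ≤ hammingDist (0 : Fm m) (γ : Fm m) :=
          hC 0 h0 _ hγC (fun h => hγne h.symm)
        -- pick i with γ i ≠ 0
        have : ∃ i, (γ : Fm m) i ≠ 0 := by
          by_contra h
          push_neg at h
          exact hγne (funext h)
        obtain ⟨i, hi⟩ := this
        have hi1 : (γ : Fm m) i = 1 := by
          have : ∀ a : ZMod 2, a ≠ 0 → a = 1 := by decide
          exact this _ hi
        set π : Fm m := Pi.single i 1 with hπ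
        have hπ0 : π ≠ 0 := single_ne_zero' i
        have hπγ : π ≠ (γ : Fm m) := by
          intro h
          have := wt_le_two (γ : Fm m) i i (fun k hk _ => by
            rw [← h, hπ, Pi.single_eq_of_ne hk])
          omega
        have hkey := hc.2 π hπ0 hπγ
        -- compute coord at π
        have h1 : coord (zhat (γ : Fm m) + eWord γ) π = 1 := by
          rw [coord, dif_neg hπ0]
          show zhat (γ : Fm m) ⟨π, hπ0⟩ + eWord γ ⟨π, hπ0⟩ = 1
          rw [zhat_single _ i, eWord, if_neg, hi1, add_zero]
          intro h
          exact hπγ (congrArg Subtype.val h)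
        -- compute coord at π + γ
        have hβ0 : π + (γ : Fm m) ≠ 0 := add_ne_zero_of_ne' hπγ
        have h2 : coord (zhat (γ : Fm m) + eWord γ) (π + γ) = 0 := by
          rw [coord, dif_neg hβ0]
          show zhat (γ : Fm m) ⟨_, hβ0⟩ + eWord γ ⟨_, hβ0⟩ = 0
          rw [zhat_not_single, eWord, if_neg, add_zero]
          · intro h
            have h2 : π + (γ : Fm m) = (γ : Fm m) := congrArg Subtype.val h
            apply hπ0
            calc π = π + ((γ : Fm m) + (γ : Fm m)) := by rw [double_zero_m, add_zero]
              _ = (π + (γ : Fm m)) + (γ : Fm m) := (add_assoc _ _ _).symm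
              _ = (γ : Fm m) + (γ : Fm m) := by rw [h2]
              _ = 0 := double_zero_m _
          · -- π + γ is not a basis vector
            intro j h
            have h' : π + (γ : Fm m) = Pi.single j 1 := h
            have hγval : (γ : Fm m) = π + Pi.single j 1 := by
              rw [← h']
              calc (γ : Fm m) = (π + π) + (γ : Fm m) := by rw [double_zero_m, zero_add]
                _ = π + (π + (γ : Fm m)) := add_assoc _ _ _
            have := wt_le_two (γ : Fm m) i j (fun k hk hk' => by
              rw [hγval]
              simp only [Pi.add_apply]
              rw [hπ, Pi.single_eq_of_ne hk, Pi.single_eq_of_ne hk', add_zero])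
            omega
        rw [h1, h2] at hkey
        exact one_ne_zero hkey
    · right
      rw [Set.mem_iUnion]
      refine ⟨⟨ι, hz⟩, ?_⟩
      rw [Set.mem_iUnion]
      refine ⟨hι, 0, ⟨?_, ?_⟩, by simp⟩
      · show ∑ κ : Idx m, (0 : ZMod 2) • (κ : Fm m) = 0
        simp
      · intro α hα hα'
        rw [coord, coord]
        split <;> split <;> rfl
  · intro hmem
    rcases hmem with ⟨hH, -⟩ | hU
    · have h1 : ∑ κ : Idx m, zhat ι κ • (κ : Fm m) = 0 := hH
      rw [syndrome_zhat] at h1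
      rw [h1]; exact h0
    · rw [Set.mem_iUnion] at hU
      obtain ⟨γ, hU⟩ := hU
      rw [Set.mem_iUnion] at hU
      obtain ⟨hγC, c, hc, hceq⟩ := hU
      -- c + zhat γ = zhat ι, syndrome c = 0, so γ = ι
      have hceq' : c + zhat (γ : Fm m) = zhat ι := hceq
      have hcH : ∑ κ : Idx m, c κ • (κ : Fm m) = 0 := hc.1
      have hsyn : ι = (0 : Fm m) + (γ : Fm m) := by
        rw [← syndrome_zhat ι, ← hceq', syndrome_add, hcH, syndrome_zhat]
      rw [hsyn, zero_add]; exact hγC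
end

section
/- For every nonempty 1-code C ⊆ F^m there exists a 1-perfect code P ⊆ F^n, where n = 2^m − 1, such that C = {ι ∈ F^m : ẑι ∈ P}; in other words, every binary 1-error-correcting code of length m can be embedded in a 1-perfect code of length 2^m − 1 by fixing the last n − m coordinates to zero. -/
/-!
Translating `C` by one of its words reduces the theorem to the case `0 ∈ C`. Then every nonzero
`ι ∈ C`, and every sum of two distinct such words, has weight at least 3. The perfect code is
obtained from the Hamming code `H` by switching: for each nonzero `ι ∈ C`, the coset
`K_ι = R_ι + ẑι + e^ι` of the linear `ι`-component inside `H` is replaced by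
`K_ι + e^ι = R_ι + ẑι`, which contains `ẑι`. A switched component covers what `K_ι` covered and
stays at distance at least 3 from the rest of `H`. Two switched components for distinct `ι, κ`
are at distance at least 3 by a parity check on the four coordinates `α + ⟨ι, κ⟩`, `α` a unit
vector with `(ι + κ)_α = 1`: the sum vanishes on `R_ι`, on `R_κ` and on short words of syndrome
`ι + κ`, but equals 1 on `ẑ(ι + κ)`. The weight conditions also keep `ẑ0 = 0` from being
switched away.
-/

open Finset

lemma ZModModule.add_eq_zero_iff_eq {G : Type*} [AddCommGroup G] [Module (ZMod 2) G] {x y : G} :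
    x + y = 0 ↔ x = y := by
  rw [add_eq_zero_iff_eq_neg, ZModModule.neg_eq_self]

lemma ZModModule.add_eq_iff_eq_add {G : Type*} [AddCommGroup G] [Module (ZMod 2) G] {x y z : G} :
    x + y = z ↔ x = z + y := by
  rw [← sub_eq_iff_eq_add, ZModModule.sub_eq_add]

section BinaryWords

variable {α : Type*}

lemma exists_eq_one_of_ne_zero {x : α → ZMod 2} (hx : x ≠ 0) : ∃ i, x i = 1 := by
  obtain ⟨i, hi⟩ := Function.ne_iff.1 hx
  exact ⟨i, Fin.eq_one_of_ne_zero _ hi⟩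

variable [Fintype α]

lemma hammingDist_eq_hammingNorm_add (x y : α → ZMod 2) :
    hammingDist x y = hammingNorm (x + y) := by
  rw [hammingDist_comm, hammingDist_eq_hammingNorm, ZModModule.neg_eq_self, add_comm]

lemma hammingDist_add_right_eq {β : α → Type*} [∀ i, DecidableEq (β i)]
    [∀ i, AddCommGroup (β i)] (x y z : ∀ i, β i) :
    hammingDist (x + z) (y + z) = hammingDist x y := by
  rw [hammingDist_eq_hammingNorm, hammingDist_eq_hammingNorm]
  congr 1
  abel

lemma IsOneCode.preimage_add_right {C : Set (α → ZMod 2)} (hC : IsOneCode C) (z : α → ZMod 2) :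
    IsOneCode ((· + z) ⁻¹' C) := fun x hx y hy hxy => by
  rw [← hammingDist_add_right_eq x y z]
  exact hC _ hx _ hy (by simpa using hxy)

lemma hammingNorm_le_hammingNorm_add_add (u v : α → ZMod 2) :
    hammingNorm v ≤ hammingNorm (u + v) + hammingNorm u := by
  have h := hammingDist_triangle v u 0
  rwa [hammingDist_zero_right, hammingDist_zero_right, hammingDist_eq_hammingNorm_add,
    add_comm v] at h

variable [DecidableEq α]

lemma hammingNorm_single_one (i : α) : hammingNorm (Pi.single i 1 : α → ZMod 2) = 1 := by
  simp [hammingNorm, Pi.single_apply, Finset.filter_eq']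

lemma eq_sum_single_of_zmod_two (x : α → ZMod 2) :
    x = ∑ i ∈ univ.filter (x · ≠ 0), (Pi.single i 1 : α → ZMod 2) := by
  ext j
  by_cases hj : x j = 0
  · simp [Finset.sum_apply, Pi.single_apply, hj]
  · simp only [ne_eq, Finset.sum_apply, Pi.single_apply, sum_ite_eq, mem_filter, mem_univ, hj,
      not_false_eq_true, and_self, ↓reduceIte]
    exact Fin.eq_one_of_ne_zero _ hj

lemma hammingNorm_le_one_cases {x : α → ZMod 2} (h : hammingNorm x ≤ 1) :
    x = 0 ∨ ∃ i, x = Pi.single i 1 := by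
  rw [eq_sum_single_of_zmod_two x]
  rcases Nat.le_one_iff_eq_zero_or_eq_one.mp h with h | h
  · rw [hammingNorm, card_eq_zero] at h
    simp [h]
  · obtain ⟨i, hi⟩ := card_eq_one.mp h
    exact .inr ⟨i, by rw [hi, sum_singleton]⟩

lemma hammingNorm_le_two_cases {x : α → ZMod 2} (h : hammingNorm x ≤ 2) :
    x = 0 ∨ (∃ i, x = Pi.single i 1) ∨ ∃ i j, i ≠ j ∧ x = Pi.single i 1 + Pi.single j 1 := by
  rcases Nat.lt_or_eq_of_le h with h | h
  · exact (hammingNorm_le_one_cases (Nat.le_of_lt_succ h)).imp_right .inl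
  · obtain ⟨i, j, hij, hx⟩ := card_eq_two.mp h
    refine .inr (.inr ⟨i, j, hij, ?_⟩)
    rw [eq_sum_single_of_zmod_two x, hx, sum_pair hij]

end BinaryWords

section HammingCode

variable {m : ℕ}

lemma coord_of_ne_zero (c : Fn m) {β : Fm m} (hβ : β ≠ 0) : coord c β = c ⟨β, hβ⟩ :=
  dif_neg hβ

lemma coord_zero (β : Fm m) : coord (0 : Fn m) β = 0 := by
  unfold coord; split <;> rfl

lemma coord_add (x y : Fn m) (β : Fm m) : coord (x + y) β = coord x β + coord y β := by
  unfold coord; split <;> simp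

lemma coord_single {β : Fm m} (hβ : β ≠ 0) (μ : Idx m) :
    coord (Pi.single μ 1) β = if β = μ then 1 else 0 := by
  simp [coord_of_ne_zero _ hβ, Pi.single_apply, Subtype.ext_iff]

def basisIdx (i : Fin m) : Idx m := ⟨Pi.single i 1, by simp⟩

lemma zhat_eq_sum (a : Fm m) : zhat a = ∑ i, Pi.single (basisIdx i) (a i) := by
  ext κ
  simp [zhat, Finset.sum_apply, Pi.single_apply, basisIdx, Subtype.ext_iff]

lemma zhat_add (a b : Fm m) : zhat (a + b) = zhat a + zhat b := by
  simp [zhat_eq_sum, Pi.single_add, sum_add_distrib]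

lemma zhat_zero : zhat (0 : Fm m) = 0 := by
  simp [zhat_eq_sum]

lemma single_one_injective : Function.Injective (fun i : Fin m => (Pi.single i 1 : Fm m)) := by
  intro i j h
  by_contra hij
  simpa [hij] using congrFun h i

lemma coord_zhat_single (a : Fm m) (i : Fin m) : coord (zhat a) (Pi.single i 1) = a i := by
  rw [coord_of_ne_zero _ (by simp)]
  simp [zhat, single_one_injective.eq_iff]

lemma coord_zhat_of_two_le_hammingNorm {β : Fm m} (hβ : 2 ≤ hammingNorm β) (a : Fm m) :
    coord (zhat a) β = 0 := by
  have hβ0 : β ≠ 0 := by rintro rfl; simp at hβ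
  rw [coord_of_ne_zero _ hβ0]
  refine sum_eq_zero fun i _ => if_neg ?_
  rintro h
  rw [show β = Pi.single i 1 from h, hammingNorm_single_one] at hβ
  omega

def syndrome : Fn m →ₗ[ZMod 2] Fm m :=
  Fintype.linearCombination (ZMod 2) (fun ι : Idx m => (ι : Fm m))

lemma mem_hammingCode_iff {c : Fn m} : c ∈ hammingCode m ↔ syndrome c = 0 := by
  rw [syndrome, Fintype.linearCombination_apply]; rfl

lemma syndrome_single (μ : Idx m) : syndrome (Pi.single μ 1) = μ := by
  simp [syndrome]

lemma syndrome_zhat_s13 (a : Fm m) : syndrome (zhat a) = a := by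
  simpa [zhat_eq_sum, syndrome, basisIdx] using (pi_eq_sum_univ' a).symm

lemma add_mem_hammingCode {x y : Fn m} (hx : x ∈ hammingCode m) (hy : y ∈ hammingCode m) :
    x + y ∈ hammingCode m := by
  rw [mem_hammingCode_iff] at *
  rw [map_add, hx, hy, add_zero]

lemma zhat_mem_hammingCode_iff {a : Fm m} : zhat a ∈ hammingCode m ↔ a = 0 := by
  rw [mem_hammingCode_iff, syndrome_zhat_s13]

lemma three_le_hammingNorm_of_mem_hammingCode {q : Fn m} (hq : q ∈ hammingCode m)
    (hq0 : q ≠ 0) : 3 ≤ hammingNorm q := by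
  by_contra! h
  rw [mem_hammingCode_iff] at hq
  rcases hammingNorm_le_two_cases (Nat.le_of_lt_succ h) with rfl | ⟨μ, rfl⟩ | ⟨μ, ν, hμν, rfl⟩
  · exact hq0 rfl
  · exact μ.2 (by rwa [syndrome_single] at hq)
  · rw [map_add, syndrome_single, syndrome_single] at hq
    exact add_ne_zero_of_ne' (Subtype.coe_injective.ne hμν) hq

lemma three_le_hammingDist_of_mem_hammingCode {x y : Fn m} (hx : x ∈ hammingCode m)
    (hy : y ∈ hammingCode m) (hxy : x ≠ y) : 3 ≤ hammingDist x y := by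
  rw [hammingDist_eq_hammingNorm_add]
  refine three_le_hammingNorm_of_mem_hammingCode (add_mem_hammingCode hx hy) ?_
  rwa [Ne, ZModModule.add_eq_zero_iff_eq]

lemma exists_mem_hammingCode_hammingDist_le_one (x : Fn m) :
    ∃ c ∈ hammingCode m, hammingDist x c ≤ 1 := by
  by_cases hx : syndrome x = 0
  · exact ⟨x, hx, by simp⟩
  · refine ⟨x + Pi.single ⟨syndrome x, hx⟩ 1, ?_, ?_⟩
    · rw [mem_hammingCode_iff, map_add, syndrome_single, ZModModule.add_self]
    · rw [hammingDist_eq_hammingNorm_add, ← add_assoc, ZModModule.add_self, zero_add,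
        hammingNorm_single_one]

end HammingCode

section ShiftInvariance

variable {m : ℕ}

def IsShiftInvariant (ι : Fm m) (c : Fn m) : Prop :=
  ∀ α : Fm m, α ≠ 0 → α ≠ ι → coord c α = coord c (α + ι)

lemma IsShiftInvariant.add {ι : Fm m} {c d : Fn m} (hc : IsShiftInvariant ι c)
    (hd : IsShiftInvariant ι d) : IsShiftInvariant ι (c + d) := fun α h0 hι => by
  rw [coord_add, coord_add, hc α h0 hι, hd α h0 hι]

lemma isShiftInvariant_single_self (ι : Idx m) : IsShiftInvariant ι (Pi.single ι 1) :=
  fun α h0 hι => by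
    rw [coord_single h0, coord_single (add_ne_zero_of_ne' hι), if_neg hι, if_neg]
    rwa [add_eq_right]

lemma isShiftInvariant_single_add_single {ι : Fm m} {μ ν : Idx m} (h : (μ : Fm m) + ν = ι) :
    IsShiftInvariant ι (Pi.single μ 1 + Pi.single ν 1) := fun α h0 hι => by
  have hμ : α + ι = μ ↔ α = ν := by
    rw [ZModModule.add_eq_iff_eq_add, ← h, ← add_assoc, ZModModule.add_self, zero_add]
  have hν : α + ι = ν ↔ α = μ := by
    rw [ZModModule.add_eq_iff_eq_add, ← h, add_comm (μ : Fm m), ← add_assoc,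
      ZModModule.add_self, zero_add]
  simp only [coord_add, coord_single h0, coord_single (add_ne_zero_of_ne' hι), hμ, hν]
  exact add_comm _ _

def kleinSum (c : Fn m) (α ι κ : Fm m) : ZMod 2 :=
  coord c α + coord c (α + ι) + coord c (α + κ) + coord c (α + ι + κ)

lemma kleinSum_add (c d : Fn m) (α ι κ : Fm m) :
    kleinSum (c + d) α ι κ = kleinSum c α ι κ + kleinSum d α ι κ := by
  simp only [kleinSum, coord_add]
  ring

lemma kleinSum_comm (c : Fn m) (α ι κ : Fm m) : kleinSum c α ι κ = kleinSum c α κ ι := by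
  simp only [kleinSum, add_right_comm α ι κ]
  ring

lemma kleinSum_add_left (c : Fn m) (α ι κ : Fm m) :
    kleinSum c α (ι + κ) ι = kleinSum c α ι κ := by
  have h : α + ι + κ + ι = α + κ := by
    rw [add_right_comm, add_assoc α, ZModModule.add_self, add_zero]
  simp only [kleinSum, ← add_assoc, h]
  ring

lemma IsShiftInvariant.kleinSum_eq_zero {ι κ α : Fm m} {c : Fn m} (hc : IsShiftInvariant ι c)
    (hα : hammingNorm α = 1) (hι : 3 ≤ hammingNorm ι) (hκ : 3 ≤ hammingNorm κ)
    (hικ : 3 ≤ hammingNorm (ι + κ)) : kleinSum c α ι κ = 0 := by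
  have hne : ∀ v : Fm m, hammingNorm v ≠ 1 → α ≠ v := fun v hv h => hv (h ▸ hα)
  have pair : ∀ β, β ≠ 0 → β ≠ ι → coord c β + coord c (β + ι) = 0 := fun β h0 h1 => by
    rw [hc β h0 h1]
    exact ZModModule.add_self _
  have h₁ := pair α (hne 0 (by simp)) (hne ι (by omega))
  have h₂ := pair (α + κ) (fun h => hne κ (by omega) (ZModModule.add_eq_zero_iff_eq.1 h))
    (fun h => hne (ι + κ) (by omega) (ZModModule.add_eq_iff_eq_add.1 h))
  rw [kleinSum, add_right_comm α ι κ]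
  linear_combination h₁ + h₂

lemma kleinSum_zhat {ι κ : Fm m} (i : Fin m) (hι : 3 ≤ hammingNorm ι) (hκ : 3 ≤ hammingNorm κ)
    (hικ : 3 ≤ hammingNorm (ι + κ)) (a : Fm m) : kleinSum (zhat a) (Pi.single i 1) ι κ = a i := by
  have h := hammingNorm_single_one i
  have hv : ∀ v : Fm m, 3 ≤ hammingNorm v → coord (zhat a) (Pi.single i 1 + v) = 0 :=
    fun v hv => coord_zhat_of_two_le_hammingNorm
      (by have := hammingNorm_le_hammingNorm_add_add (Pi.single i 1) v; omega) a
  rw [kleinSum, coord_zhat_single, hv ι hι, hv κ hκ, add_assoc _ ι, hv _ hικ]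
  ring

end ShiftInvariance

section Rcomp

variable {m : ℕ}

lemma zero_mem_Rcomp (ι : Idx m) : (0 : Fn m) ∈ Rcomp ι :=
  ⟨by simp [mem_hammingCode_iff], fun α _ _ => by rw [coord_zero, coord_zero]⟩

lemma add_mem_Rcomp {ι : Idx m} {x y : Fn m} (hx : x ∈ Rcomp ι) (hy : y ∈ Rcomp ι) :
    x + y ∈ Rcomp ι :=
  ⟨add_mem_hammingCode hx.1 hy.1, IsShiftInvariant.add hx.2 hy.2⟩

lemma single_add_single_add_single_mem_Rcomp {ι μ ν : Idx m} (h : (μ : Fm m) + ν = ι) :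
    Pi.single ι 1 + (Pi.single μ 1 + Pi.single ν 1) ∈ Rcomp ι := by
  refine ⟨?_, (isShiftInvariant_single_self ι).add (isShiftInvariant_single_add_single h)⟩
  rw [mem_hammingCode_iff, map_add, map_add, syndrome_single, syndrome_single, syndrome_single, h,
    ZModModule.add_self]

lemma mem_Rcomp_of_hammingNorm_add_single_le_two {ι : Idx m} {q : Fn m}
    (hq : q ∈ hammingCode m) (h : hammingNorm (q + Pi.single ι 1) ≤ 2) : q ∈ Rcomp ι := by
  obtain ⟨p, rfl⟩ : ∃ p, q = p + Pi.single ι 1 :=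
    ⟨q + Pi.single ι 1, by rw [add_assoc, ZModModule.add_self, add_zero]⟩
  rw [add_assoc, ZModModule.add_self, add_zero] at h
  rw [mem_hammingCode_iff, map_add, syndrome_single] at hq
  rcases hammingNorm_le_two_cases h with rfl | ⟨μ, rfl⟩ | ⟨μ, ν, -, rfl⟩
  · rw [map_zero, zero_add] at hq
    exact absurd hq ι.2
  · rw [syndrome_single, ZModModule.add_eq_zero_iff_eq, ← Subtype.ext_iff] at hq
    rw [hq, ZModModule.add_self]
    exact zero_mem_Rcomp ι
  · rw [map_add, syndrome_single, syndrome_single, ZModModule.add_eq_zero_iff_eq] at hq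
    rw [add_comm]
    exact single_add_single_add_single_mem_Rcomp hq

end Rcomp

section Switching

variable {m : ℕ}

def hammingComponent (ι : Idx m) : Set (Fn m) := {x | x + (zhat ι + Pi.single ι 1) ∈ Rcomp ι}

def switchedComponent (ι : Idx m) : Set (Fn m) := {x | x + zhat ι ∈ Rcomp ι}

lemma add_single_mem_switchedComponent_iff {ι : Idx m} {x : Fn m} :
    x + Pi.single ι 1 ∈ switchedComponent ι ↔ x ∈ hammingComponent ι := by
  rw [switchedComponent, hammingComponent, Set.mem_ofPred_eq, Set.mem_ofPred_eq, add_assoc,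
    add_comm (Pi.single _ _)]

lemma add_single_mem_hammingComponent_iff {ι : Idx m} {x : Fn m} :
    x + Pi.single ι 1 ∈ hammingComponent ι ↔ x ∈ switchedComponent ι := by
  rw [← add_single_mem_switchedComponent_iff, add_assoc, ZModModule.add_self, add_zero]

lemma hammingComponent_subset (ι : Idx m) : hammingComponent ι ⊆ hammingCode m := fun x hx => by
  have hz : zhat ι + Pi.single ι 1 ∈ hammingCode m := by
    rw [mem_hammingCode_iff, map_add, syndrome_zhat_s13, syndrome_single, ZModModule.add_self]
  simpa [add_assoc, ZModModule.add_self] using add_mem_hammingCode hx.1 hz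

lemma add_mem_hammingComponent {ι : Idx m} {x r : Fn m} (hx : x ∈ hammingComponent ι)
    (hr : r ∈ Rcomp ι) : x + r ∈ hammingComponent ι := by
  have h := add_mem_Rcomp hx hr
  rwa [add_right_comm] at h

lemma zero_not_mem_hammingComponent {ι : Idx m} (hι : 3 ≤ hammingNorm (ι : Fm m)) :
    (0 : Fn m) ∉ hammingComponent ι := by
  intro h
  rw [hammingComponent, Set.mem_ofPred_eq, zero_add] at h
  obtain ⟨i, hi⟩ := exists_eq_one_of_ne_zero ι.2
  have hα := hammingNorm_single_one i
  have hα0 : (Pi.single i 1 : Fm m) ≠ 0 := by simp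
  have hαι : (Pi.single i 1 : Fm m) ≠ ι := fun h => by rw [h] at hα; omega
  have hpair := h.2 _ hα0 hαι
  rw [coord_add, coord_add, coord_zhat_single, coord_zhat_of_two_le_hammingNorm
    (by have := hammingNorm_le_hammingNorm_add_add (Pi.single i 1) (ι : Fm m); omega),
    coord_single hα0, coord_single (add_ne_zero_of_ne' hαι), if_neg hαι,
    if_neg (by rwa [add_eq_right]), hi] at hpair
  simp at hpair

lemma zhat_mem_switchedComponent_iff {ι : Idx m} {a : Fm m} :
    zhat a ∈ switchedComponent ι ↔ a = ι := by
  refine ⟨fun h => ?_, ?_⟩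
  · have h := h.1
    rwa [← zhat_add, zhat_mem_hammingCode_iff, ZModModule.add_eq_zero_iff_eq] at h
  · rintro rfl
    rw [switchedComponent, Set.mem_ofPred_eq, ZModModule.add_self]
    exact zero_mem_Rcomp ι

lemma mem_hammingComponent_of_hammingDist_le_two {ι : Idx m} {s h : Fn m}
    (hs : s ∈ switchedComponent ι) (hh : h ∈ hammingCode m) (hd : hammingDist s h ≤ 2) :
    h ∈ hammingComponent ι := by
  have hq : s + Pi.single ι 1 + h ∈ Rcomp ι := by
    refine mem_Rcomp_of_hammingNorm_add_single_le_two (add_mem_hammingCode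
      (hammingComponent_subset ι (add_single_mem_hammingComponent_iff.2 hs)) hh) ?_
    rwa [add_right_comm, add_assoc s, ZModModule.add_self, add_zero,
      ← hammingDist_eq_hammingNorm_add]
  have h' := add_mem_Rcomp hs hq
  rw [hammingComponent, Set.mem_ofPred_eq]
  convert h' using 1
  linear_combination -ZModModule.add_self s

lemma exists_mem_switchedComponent_hammingDist_le_one {ι : Idx m} {x y : Fn m}
    (hx : x ∈ hammingComponent ι) (hd : hammingDist y x ≤ 1) :
    ∃ s ∈ switchedComponent ι, hammingDist y s ≤ 1 := by
  obtain ⟨p, rfl⟩ : ∃ p, y = x + p := ⟨x + y, by rw [← add_assoc, ZModModule.add_self, zero_add]⟩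
  rw [hammingDist_comm, hammingDist_eq_hammingNorm_add, ← add_assoc, ZModModule.add_self,
    zero_add] at hd
  rcases hammingNorm_le_one_cases hd with rfl | ⟨μ, rfl⟩
  · refine ⟨x + Pi.single ι 1, add_single_mem_switchedComponent_iff.2 hx, ?_⟩
    rw [add_zero, hammingDist_eq_hammingNorm_add, ← add_assoc, ZModModule.add_self, zero_add,
      hammingNorm_single_one]
  by_cases hμι : μ = ι
  · subst hμι
    exact ⟨x + Pi.single μ 1, add_single_mem_switchedComponent_iff.2 hx, by simp⟩
  -- `y = x + e^μ` is adjacent to the switch of `x + e^ι + e^μ + e^(ι+μ) ∈ K_ι`.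
  set ν : Idx m := ⟨ι + μ, add_ne_zero_of_ne' (Subtype.coe_injective.ne (Ne.symm hμι))⟩
  have hν : (μ : Fm m) + ν = ι := by
    rw [add_left_comm, ZModModule.add_self, add_zero]
  refine ⟨x + (Pi.single ι 1 + (Pi.single μ 1 + Pi.single ν 1)) + Pi.single ι 1,
    add_single_mem_switchedComponent_iff.2
      (add_mem_hammingComponent hx (single_add_single_add_single_mem_Rcomp hν)), ?_⟩
  have hs : x + Pi.single μ 1 + (x + (Pi.single ι 1 + (Pi.single μ 1 + Pi.single ν 1)) +
      Pi.single ι 1) = Pi.single ν 1 := by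
    linear_combination ZModModule.add_self x + ZModModule.add_self (Pi.single μ 1 : Fn m) +
      ZModModule.add_self (Pi.single ι 1 : Fn m)
  rw [hammingDist_eq_hammingNorm_add, hs, hammingNorm_single_one]

lemma three_le_hammingDist_of_mem_switchedComponent {ι : Idx m} {s s' : Fn m}
    (hs : s ∈ switchedComponent ι) (hs' : s' ∈ switchedComponent ι) (hne : s ≠ s') :
    3 ≤ hammingDist s s' := by
  rw [← hammingDist_add_right_eq s s' (zhat ι)]
  exact three_le_hammingDist_of_mem_hammingCode hs.1 hs'.1 (by simpa using hne)

lemma three_le_hammingDist_of_mem_switchedComponent_of_ne {ι κ : Idx m} (hικ : ι ≠ κ)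
    (hι : 3 ≤ hammingNorm (ι : Fm m)) (hκ : 3 ≤ hammingNorm (κ : Fm m))
    (hε : 3 ≤ hammingNorm ((ι : Fm m) + (κ : Fm m))) {s s' : Fn m} (hs : s ∈ switchedComponent ι)
    (hs' : s' ∈ switchedComponent κ) : 3 ≤ hammingDist s s' := by
  by_contra! hd
  rw [hammingDist_eq_hammingNorm_add] at hd
  have hε0 := add_ne_zero_of_ne' (Subtype.coe_injective.ne hικ)
  set ε : Idx m := ⟨(ι : Fm m) + (κ : Fm m), hε0⟩
  have hw : s + s' = (s + zhat ι) + (s' + zhat κ) + zhat ((ι : Fm m) + (κ : Fm m)) := by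
    rw [zhat_add]
    linear_combination
      -ZModModule.add_self (zhat (ι : Fm m)) - ZModModule.add_self (zhat (κ : Fm m))
  have hq : s + s' + Pi.single ε 1 ∈ Rcomp ε := by
    refine mem_Rcomp_of_hammingNorm_add_single_le_two ?_ ?_
    · rw [mem_hammingCode_iff, map_add, hw, map_add, map_add, mem_hammingCode_iff.1 hs.1,
        mem_hammingCode_iff.1 hs'.1, syndrome_zhat_s13, syndrome_single, zero_add, zero_add,
        ZModModule.add_self]
    · rw [add_assoc, ZModModule.add_self, add_zero]
      omega
  have hw_inv : IsShiftInvariant ((ι : Fm m) + (κ : Fm m)) (s + s') := by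
    simpa [add_assoc, ZModModule.add_self] using
      IsShiftInvariant.add hq.2 (isShiftInvariant_single_self ε)
  obtain ⟨i, hi⟩ := exists_eq_one_of_ne_zero hε0
  have hα := hammingNorm_single_one i
  have h₁ : kleinSum (s + zhat ι) (Pi.single i 1) ι κ = 0 :=
    IsShiftInvariant.kleinSum_eq_zero hs.2 hα hι hκ hε
  have h₂ : kleinSum (s' + zhat κ) (Pi.single i 1) ι κ = 0 := by
    rw [kleinSum_comm]
    exact IsShiftInvariant.kleinSum_eq_zero hs'.2 hα hκ hι (by rwa [add_comm])
  have h₃ : kleinSum (s + s') (Pi.single i 1) ι κ = 0 := by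
    rw [← kleinSum_add_left]
    exact hw_inv.kleinSum_eq_zero hα hε hι
      (by rwa [add_right_comm, ZModModule.add_self, zero_add])
  rw [hw, kleinSum_add, kleinSum_add, h₁, h₂, kleinSum_zhat i hι hκ hε, zero_add, zero_add,
    hi] at h₃
  exact one_ne_zero h₃

end Switching

section SwitchedCode

variable {m : ℕ}

def switchedCode (D : Set (Idx m)) : Set (Fn m) :=
  (hammingCode m \ ⋃ ι ∈ D, hammingComponent ι) ∪ ⋃ ι ∈ D, switchedComponent ι

lemma isOneCode_switchedCode {D : Set (Idx m)} (hD : ∀ ι ∈ D, 3 ≤ hammingNorm (ι : Fm m))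
    (hD₂ : ∀ ι ∈ D, ∀ κ ∈ D, ι ≠ κ → 3 ≤ hammingNorm ((ι : Fm m) + (κ : Fm m))) :
    IsOneCode (switchedCode D) := by
  have mixed : ∀ x ∈ hammingCode m \ ⋃ ι ∈ D, hammingComponent ι,
      ∀ y ∈ ⋃ ι ∈ D, switchedComponent ι, 3 ≤ hammingDist x y := by
    rintro x ⟨hxH, hxD⟩ y hy
    obtain ⟨ι, hι, hyι⟩ := Set.mem_iUnion₂.1 hy
    by_contra! hxy
    refine hxD (Set.mem_iUnion₂.2 ⟨ι, hι, mem_hammingComponent_of_hammingDist_le_two hyι hxH ?_⟩)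
    rw [hammingDist_comm]
    omega
  rintro x (hx | hx) y (hy | hy) hxy
  · exact three_le_hammingDist_of_mem_hammingCode hx.1 hy.1 hxy
  · exact mixed x hx y hy
  · rw [hammingDist_comm]
    exact mixed y hy x hx
  · obtain ⟨ι, hι, hxι⟩ := Set.mem_iUnion₂.1 hx
    obtain ⟨κ, hκ, hyκ⟩ := Set.mem_iUnion₂.1 hy
    rcases eq_or_ne ι κ with rfl | hικ
    · exact three_le_hammingDist_of_mem_switchedComponent hxι hyκ hxy
    · exact three_le_hammingDist_of_mem_switchedComponent_of_ne hικ (hD ι hι) (hD κ hκ)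
        (hD₂ ι hι κ hκ hικ) hxι hyκ

lemma exists_mem_switchedCode_hammingDist_le_one (D : Set (Idx m)) (x : Fn m) :
    ∃ c ∈ switchedCode D, hammingDist x c ≤ 1 := by
  obtain ⟨c, hc, hxc⟩ := exists_mem_hammingCode_hammingDist_le_one x
  by_cases hcD : c ∈ ⋃ ι ∈ D, hammingComponent ι
  · obtain ⟨ι, hι, hcι⟩ := Set.mem_iUnion₂.1 hcD
    obtain ⟨s, hs, hxs⟩ := exists_mem_switchedComponent_hammingDist_le_one hcι hxc
    exact ⟨s, .inr (Set.mem_iUnion₂.2 ⟨ι, hι, hs⟩), hxs⟩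
  · exact ⟨c, .inl ⟨hc, hcD⟩, hxc⟩

lemma zhat_mem_switchedCode_iff {D : Set (Idx m)} (hD : ∀ ι ∈ D, 3 ≤ hammingNorm (ι : Fm m))
    {a : Fm m} : zhat a ∈ switchedCode D ↔ a = 0 ∨ ∃ ι ∈ D, a = ι := by
  simp only [switchedCode, Set.mem_union, Set.mem_sdiff, Set.mem_iUnion₂,
    zhat_mem_hammingCode_iff, zhat_mem_switchedComponent_iff, exists_prop]
  refine ⟨Or.imp_left And.left, ?_⟩
  rintro (rfl | h)
  · refine .inl ⟨rfl, ?_⟩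
    rintro ⟨ι, hι, h0⟩
    rw [zhat_zero] at h0
    exact zero_not_mem_hammingComponent (hD ι hι) h0
  · exact .inr h

end SwitchedCode

theorem exists_isOnePerfect_of_zero_mem {m : ℕ} {C : Set (Fm m)} (hC : IsOneCode C)
    (h0 : (0 : Fm m) ∈ C) : ∃ P : Set (Fn m), IsOnePerfect P ∧ C = {a : Fm m | zhat a ∈ P} := by
  set D : Set (Idx m) := {ι | (ι : Fm m) ∈ C}
  have hD : ∀ ι ∈ D, 3 ≤ hammingNorm (ι : Fm m) := fun ι hι => by
    simpa using hC 0 h0 ι hι (Ne.symm ι.2)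
  have hD₂ : ∀ ι ∈ D, ∀ κ ∈ D, ι ≠ κ → 3 ≤ hammingNorm ((ι : Fm m) + (κ : Fm m)) :=
    fun ι hι κ hκ hικ => by
      simpa [hammingDist_eq_hammingNorm_add] using hC ι hι κ hκ (Subtype.coe_injective.ne hικ)
  refine ⟨switchedCode D, ⟨isOneCode_switchedCode hD hD₂,
    exists_mem_switchedCode_hammingDist_le_one D⟩, ?_⟩
  ext a
  rw [Set.mem_ofPred_eq, zhat_mem_switchedCode_iff hD]
  refine ⟨fun ha => ?_, ?_⟩
  · by_cases ha0 : a = 0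
    · exact .inl ha0
    · exact .inr ⟨⟨a, ha0⟩, ha, rfl⟩
  · rintro (rfl | ⟨ι, hι, rfl⟩)
    exacts [h0, hι]

lemma IsOnePerfect.preimage_add_right {m : ℕ} {P : Set (Fn m)} (hP : IsOnePerfect P)
    (z : Fn m) : IsOnePerfect ((· + z) ⁻¹' P) := by
  refine ⟨hP.1.preimage_add_right z, fun x => ?_⟩
  obtain ⟨c, hc, hxc⟩ := hP.2 (x + z)
  refine ⟨c + z, by simpa [add_assoc, ZModModule.add_self] using hc, ?_⟩
  rwa [← hammingDist_add_right_eq x _ z, add_assoc c, ZModModule.add_self, add_zero]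

theorem stmt13_general (m : ℕ) (C : Set (Fm m)) (hC : IsOneCode C)
    (hne : C.Nonempty) :
    ∃ P : Set (Fn m), IsOnePerfect P ∧ C = {ι : Fm m | zhat ι ∈ P} := by
  obtain ⟨γ, hγ⟩ := hne
  obtain ⟨P, hP, hCP⟩ :=
    exists_isOnePerfect_of_zero_mem (hC.preimage_add_right γ) (by simpa using hγ)
  refine ⟨(· + zhat γ) ⁻¹' P, hP.preimage_add_right _, Set.ext fun a => ?_⟩
  simpa [zhat_add, add_assoc, ZModModule.add_self] using Set.ext_iff.1 hCP (a + γ)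

/-- Every nonempty 1-code `C ⊆ F^m` can be embedded in a 1-perfect code
`P ⊆ F^n`, `n = 2^m - 1`: there is a 1-perfect `P` with `C = {ι ∈ F^m : ẑι ∈ P}`. -/
theorem stmt13 (m : ℕ) (hm : 1 ≤ m) (C : Set (Fm m)) (hC : IsOneCode C)
    (hne : C.Nonempty) :
    ∃ P : Set (Fn m), IsOnePerfect P ∧ C = {ι : Fm m | zhat ι ∈ P} :=
  stmt13_general m C hC hne
end
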